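/- arXiv:0709.3412 — 4 statements merged into one kernel-verified Lean document; each statement's English description precedes it below -/
import Mathlib

section
/- An R-module E is finitely generated projective if and only if for every R-module E', the canonical map Hom_R(E, R) ⊗_R E' → Hom_R(E, E') (sending w ⊗ e' to the map e ↦ w(e) • e') is bijective. -/
open TensorProduct

/-- An `R`-module `E` is finitely generated projective if and only if for every `R`-module `E'`,
the canonical map `Hom_R(E, R) ⊗_R E' → Hom_R(E, E')`, `w ⊗ e' ↦ (e ↦ w e • e')`, is bijective. -/
theorem stmt0 {R : Type u} [CommRing R] (E : Type u) [AddCommGroup E] [Module R E] :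
    (Module.Finite R E ∧ Module.Projective R E) ↔
      ∀ (E' : Type u) [AddCommGroup E'] [Module R E'],
        Function.Bijective (dualTensorHom R E E') := by
  refine ⟨fun ⟨_, _⟩ E' _ _ => dualTensorHom_bijective, fun H => ?_⟩
  have hid : 1 ∈ LinearMap.range (dualTensorHom R E E) := (H E).surjective 1
  exact ⟨.of_one_mem_range_dualTensorHom hid, .of_one_mem_range_dualTensorHom hid⟩
end

section
/- An R-module E is finitely generated projective if and only if for every commutative R-algebra B, the canonical map Hom_R(E, R) ⊗_R B → Hom_R(E, B) is bijective. -/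
/-!
A finite projective module is a direct summand of some `Rⁿ`, for which the canonical map is an
isomorphism; hence it is one for `E`. Conversely, take for `B` the square-zero extension `R ⊕ E`:
lifting the inclusion `E → R ⊕ E` through the canonical map and projecting to `E` writes `id_E`
as `e ↦ ∑ wⱼ(e) • eⱼ`, a finite dual basis, so `E` is finite projective.
-/

open TensorProduct LinearMap

theorem LinearMap.comp_mem_range_dualTensorHom {R M N P : Type*} [CommSemiring R]
    [AddCommMonoid M] [AddCommMonoid N] [AddCommMonoid P] [Module R M] [Module R N] [Module R P]
    {φ : M →ₗ[R] N} (hφ : φ ∈ range (dualTensorHom R M N)) (f : N →ₗ[R] P) :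
    f ∘ₗ φ ∈ range (dualTensorHom R M P) := by
  obtain ⟨t, rfl⟩ := hφ
  exact ⟨f.lTensor _ t, congr($(dualTensorHom_comp_lTensor f) t)⟩

/-- An `R`-module `E` is finitely generated projective if and only if for every commutative
`R`-algebra `B` the canonical map `Hom_R(E,R) ⊗_R B → Hom_R(E,B)`, `w ⊗ b ↦ (e ↦ w e • b)`,
is bijective. -/
theorem stmt4 {R : Type u} [CommRing R] (E : Type u) [AddCommGroup E] [Module R E] :
    (Module.Finite R E ∧ Module.Projective R E) ↔
      ∀ (B : Type u) [CommRing B] [Algebra R B],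
        Function.Bijective (dualTensorHom R E B) := by
  refine ⟨fun ⟨_, _⟩ _ _ _ => dualTensorHom_bijective, fun H => ?_⟩
  -- `E` as a symmetric `R`-bimodule, which makes `TrivSqZeroExt R E` a commutative ring.
  let : Module Rᵐᵒᵖ E := Module.compHom E ((RingHom.id R).fromOpposite mul_comm)
  have : IsCentralScalar R E := ⟨fun _ _ => rfl⟩
  have hinr : TrivSqZeroExt.inrHom R E ∈ range (dualTensorHom R E (TrivSqZeroExt R E)) :=
    (H _).2 _
  have hid : (1 : Module.End R E) ∈ range (dualTensorHom R E E) :=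
    comp_mem_range_dualTensorHom hinr (TrivSqZeroExt.sndHom R E)
  exact ⟨.of_one_mem_range_dualTensorHom hid, .of_one_mem_range_dualTensorHom hid⟩
end

section
/- Let E be an R-module such that for every commutative R-algebra B, the canonical map Hom_R(E,R) ⊗_R B → Hom_R(E, B) is surjective. Then E is finitely generated. -/
open TensorProduct

/-- If for every commutative `R`-algebra `B` the canonical map
`Hom_R(E,R) ⊗_R B → Hom_R(E,B)`, `w ⊗ b ↦ (e ↦ w e • b)`, is surjective, then `E` is
finitely generated. -/
theorem stmt9 {R : Type u} [CommRing R] (E : Type u) [AddCommGroup E] [Module R E]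
    (h : ∀ (B : Type u) [CommRing B] [Algebra R B],
      Function.Surjective (dualTensorHom R E B)) :
    Module.Finite R E := by
  classical
  letI : Module Rᵐᵒᵖ E := Module.compHom E ((RingHom.id R).fromOpposite mul_comm)
  haveI : IsCentralScalar R E := ⟨fun r m => rfl⟩
  obtain ⟨x, hx⟩ := h (TrivSqZeroExt R E) (TrivSqZeroExt.inrHom R E)
  obtain ⟨S, rfl⟩ := TensorProduct.exists_finset x
  refine ⟨⟨S.image (fun i => i.2.snd), ?_⟩⟩
  rw [eq_top_iff]
  intro e _
  have he : TrivSqZeroExt.inr e = ∑ i ∈ S, (i.1 e) • i.2 := by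
    have := congrFun (congrArg DFunLike.coe hx) e
    simpa [map_sum, dualTensorHom_apply] using this.symm
  have he2 : e = ∑ i ∈ S, (i.1 e) • i.2.snd := by
    have := congrArg TrivSqZeroExt.snd he
    simpa [TrivSqZeroExt.snd_sum] using this
  rw [he2]
  exact Submodule.sum_mem _ fun i hi => Submodule.smul_mem _ _
    (Submodule.subset_span (Finset.mem_image.mpr ⟨i, hi, rfl⟩))
end

section
/- For any R-modules E and E', every natural transformation between the functors B ↦ E ⊗_R B and B ↦ E' ⊗_R B (on commutative R-algebras, with B-linear components) is induced by a unique R-linear map E → E'; i.e., the natural transformations are in bijection with Hom_R(E, E'). -/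
open TensorProduct

/-- Every natural transformation between the functors `B ↦ E ⊗_R B` and `B ↦ E' ⊗_R B` on
commutative `R`-algebras (with `B`-linear components) is induced by a unique `R`-linear map
`E → E'`. (Base-change tensor factors are written on the left, as is customary in Mathlib.) -/
theorem stmt11 {R : Type u} [CommRing R] {E E' : Type u} [AddCommGroup E] [Module R E]
    [AddCommGroup E'] [Module R E']
    (T : ∀ (B : Type u) [CommRing B] [Algebra R B], B ⊗[R] E →ₗ[B] B ⊗[R] E')
    (nat : ∀ (B C : Type u) [CommRing B] [Algebra R B] [CommRing C] [Algebra R C]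
      (f : B →ₐ[R] C) (x : B ⊗[R] E),
        T C (f.toLinearMap.rTensor E x) = f.toLinearMap.rTensor E' (T B x)) :
    ∃! φ : E →ₗ[R] E', ∀ (B : Type u) [CommRing B] [Algebra R B],
      (T B : B ⊗[R] E →ₗ[B] B ⊗[R] E') = φ.baseChange B := by
  set φ : E →ₗ[R] E' :=
    (TensorProduct.lid R E').toLinearMap ∘ₗ (T R) ∘ₗ
      ((TensorProduct.lid R E).symm.toLinearMap) with hφ
  have hφe : ∀ e : E, φ e = TensorProduct.lid R E' (T R ((1 : R) ⊗ₜ[R] e)) := by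
    intro e; simp [hφ]
  -- key lemma: rTensor of the unit map equals 1 ⊗ lid
  have key : ∀ (B : Type u) [CommRing B] [Algebra R B] (y : R ⊗[R] E'),
      (Algebra.ofId R B).toLinearMap.rTensor E' y
        = (1 : B) ⊗ₜ[R] (TensorProduct.lid R E' y) := by
    intro B _ _ y
    induction y using TensorProduct.induction_on with
    | zero => simp
    | tmul r e' =>
        simp only [LinearMap.rTensor_tmul, AlgHom.toLinearMap_apply, lid_tmul]
        rw [Algebra.ofId_apply, Algebra.algebraMap_eq_smul_one, smul_tmul]
    | add x y hx hy => simp [hx, hy, TensorProduct.tmul_add]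
  have main : ∀ (B : Type u) [CommRing B] [Algebra R B],
      (T B : B ⊗[R] E →ₗ[B] B ⊗[R] E') = φ.baseChange B := by
    intro B _ _
    apply LinearMap.restrictScalars_injective R
    apply TensorProduct.ext'
    intro b e
    have h1 : (b : B) ⊗ₜ[R] e = b • ((1 : B) ⊗ₜ[R] e) := by simp [smul_tmul']
    rw [LinearMap.restrictScalars_apply, LinearMap.restrictScalars_apply, h1, map_smul,
      map_smul]
    congr 1
    have hn := nat R B (Algebra.ofId R B) ((1 : R) ⊗ₜ[R] e)
    rw [LinearMap.rTensor_tmul, AlgHom.toLinearMap_apply, Algebra.ofId_apply, map_one] at hn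
    rw [LinearMap.baseChange_tmul, hφe, hn, key]
  refine ⟨φ, main, ?_⟩
  intro ψ hψ
  ext e
  have := hψ R
  have he : T R ((1 : R) ⊗ₜ[R] e) = ψ.baseChange R ((1 : R) ⊗ₜ[R] e) := by rw [this]
  rw [LinearMap.baseChange_tmul] at he
  have := hφe e
  rw [he] at this
  simp at this
  rw [this]
end
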